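/- arXiv:0801.3468 — 3 statements merged into one kernel-verified Lean document; each statement's English description precedes it below -/
import Mathlib

section
/- Let w ∈ L¹((0,1)) be nonnegative almost everywhere with ∫₀¹ w(x) dx < 1. Assume f, g : (0,∞) → ℝ are two nonnegative, bounded, measurable functions such that f(t) ≤ g(t) + ∫₀¹ w(τ) f(τt) dτ for all t > 0. Then lim_{t→∞} g(t) = 0 implies lim_{t→∞} f(t) = 0. -/
open MeasureTheory Filter Set Topology

/-!
Let `L = limsup f`, `α = ∫₀¹ w < 1` and `B` a bound for `f`. Split the integral at a small `δ`:
on `(0, δ)` the integrand is at most `B w`, and `∫₀^δ w` is small, while for `τ ≥ δ` and `t`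
large, `τ t` is large, so `f (τ t) ≤ L + ε`. Hence `L ≤ α L`, which forces `L = 0`.
-/

theorem tendsto_zero_of_eventually_le_mul_add {ι : Type*} {l : Filter ι} [l.NeBot] {f : ι → ℝ}
    {α : ℝ} (hα : α < 1) (hf0 : ∀ᶠ t in l, 0 ≤ f t) (hf_bdd : IsBoundedUnder (· ≤ ·) l f)
    (hstep : ∀ c, (∀ᶠ t in l, f t ≤ c) → ∀ ε > 0, ∀ᶠ t in l, f t ≤ α * c + ε) :
    Tendsto f l (𝓝 0) := by
  have hf_cobdd : IsCoboundedUnder (· ≤ ·) l f := isCoboundedUnder_le_of_eventually_le l hf0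
  have hL : limsup f l ≤ α * limsup f l := by
    refine le_of_forall_pos_le_add fun ε hε => ?_
    have hlt : ∀ᶠ t in l, f t ≤ limsup f l + ε / 2 :=
      (eventually_lt_of_limsup_lt (by linarith) hf_bdd).mono fun _ => le_of_lt
    calc limsup f l ≤ α * (limsup f l + ε / 2) + ε / 2 :=
          limsup_le_of_le hf_cobdd (hstep _ hlt _ (half_pos hε))
      _ ≤ α * limsup f l + ε := by nlinarith
  have hL0 : limsup f l ≤ 0 := by nlinarith
  exact tendsto_order.2 ⟨fun a ha => hf0.mono fun t ht => ha.trans_le ht,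
    fun a ha => eventually_lt_of_limsup_lt (hL0.trans_lt ha) hf_bdd⟩

theorem tendsto_setIntegral_Ioo_zero_nhdsGT {w : ℝ → ℝ} {s : Set ℝ} (hw : IntegrableOn w s) :
    Tendsto (fun δ => ∫ τ in Ioo 0 δ, w τ ∂(volume.restrict s)) (𝓝[>] 0) (𝓝 0) := by
  refine hw.tendsto_setIntegral_nhds_zero ?_
  have hvol : Tendsto (fun δ => volume (Ioo (0 : ℝ) δ)) (𝓝[>] 0) (𝓝 0) := by
    simpa only [Real.volume_Ioo, sub_zero, ENNReal.ofReal_zero, id] using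
      ENNReal.tendsto_ofReal (tendsto_nhdsWithin_of_tendsto_nhds (tendsto_id (x := 𝓝 (0 : ℝ))))
  exact tendsto_of_tendsto_of_tendsto_of_le_of_le tendsto_const_nhds hvol
    (fun _ => zero_le) fun _ => Measure.restrict_apply_le _ _

section

variable {μ : Measure ℝ} {w f g : ℝ → ℝ} {B c T δ t ε : ℝ}

theorem integral_mul_comp_mul_le (hw : Integrable w μ) (hw0 : ∀ᵐ τ ∂μ, 0 ≤ w τ)
    (hpos : ∀ᵐ τ ∂μ, 0 < τ) (hf0 : ∀ s, 0 < s → 0 ≤ f s) (hfB : ∀ s, 0 < s → f s ≤ B)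
    (hfc : ∀ s, T ≤ s → f s ≤ c) (ht : 0 < t) (hδt : T ≤ δ * t) :
    ∫ τ, w τ * f (τ * t) ∂μ ≤ c * ∫ τ, w τ ∂μ + B * ∫ τ in Ioo 0 δ, w τ ∂μ := by
  have hc : 0 ≤ c := (hf0 _ (lt_max_of_lt_right one_pos)).trans (hfc _ (le_max_left T 1))
  have hbound : ∀ᵐ τ ∂μ, w τ * f (τ * t) ≤ c * w τ + B * (Ioo 0 δ).indicator w τ := by
    filter_upwards [hw0, hpos] with τ hwτ hτ
    have hτt := mul_pos hτ ht
    by_cases hτδ : τ < δ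
    · rw [indicator_of_mem (show τ ∈ Ioo 0 δ from ⟨hτ, hτδ⟩)]
      nlinarith [hfB _ hτt]
    · rw [indicator_of_notMem fun h => hτδ h.2, mul_zero, add_zero, mul_comm]
      have hT : T ≤ τ * t := hδt.trans (by gcongr; linarith)
      exact mul_le_mul_of_nonneg_right (hfc _ hT) hwτ
  have hint : Integrable (fun τ => c * w τ + B * (Ioo 0 δ).indicator w τ) μ :=
    (hw.const_mul c).add ((hw.indicator measurableSet_Ioo).const_mul B)
  have hnonneg : ∀ᵐ τ ∂μ, 0 ≤ w τ * f (τ * t) := by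
    filter_upwards [hw0, hpos] with τ hwτ hτ using mul_nonneg hwτ (hf0 _ (mul_pos hτ ht))
  calc ∫ τ, w τ * f (τ * t) ∂μ ≤ ∫ τ, (c * w τ + B * (Ioo 0 δ).indicator w τ) ∂μ :=
        integral_mono_of_nonneg hnonneg hint hbound
    _ = c * ∫ τ, w τ ∂μ + B * ∫ τ in Ioo 0 δ, w τ ∂μ := by
      rw [integral_add (hw.const_mul c) ((hw.indicator measurableSet_Ioo).const_mul B),
        integral_const_mul, integral_const_mul, integral_indicator measurableSet_Ioo]

theorem eventually_le_integral_mul_add (hw : IntegrableOn w (Ioo 0 1))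
    (hw0 : ∀ᵐ τ ∂(volume.restrict (Ioo (0 : ℝ) 1)), 0 ≤ w τ)
    (hf0 : ∀ s, 0 < s → 0 ≤ f s) (hfB : ∀ s, 0 < s → f s ≤ B)
    (hineq : ∀ t, 0 < t → f t ≤ g t + ∫ τ in Ioo (0 : ℝ) 1, w τ * f (τ * t))
    (hg : Tendsto g atTop (𝓝 0)) (hfc : ∀ᶠ t in atTop, f t ≤ c) (hε : 0 < ε) :
    ∀ᶠ t in atTop, f t ≤ (∫ τ in Ioo (0 : ℝ) 1, w τ) * c + ε := by
  obtain ⟨T, hT⟩ := eventually_atTop.1 hfc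
  obtain ⟨δ, hδtail, hδ⟩ : ∃ δ, B * ∫ τ in Ioo 0 δ, w τ ∂(volume.restrict (Ioo 0 1)) < ε / 2 ∧
      0 < δ := by
    have htail := (tendsto_setIntegral_Ioo_zero_nhdsGT hw).const_mul B
    rw [mul_zero] at htail
    exact ((htail.eventually (gt_mem_nhds (half_pos hε))).and self_mem_nhdsWithin).exists
  filter_upwards [eventually_gt_atTop 0, eventually_ge_atTop (T / δ),
    hg.eventually (gt_mem_nhds (half_pos hε))] with t ht htT hgt
  have hsplit := integral_mul_comp_mul_le hw hw0
    ((ae_restrict_mem measurableSet_Ioo).mono fun _ h => h.1) hf0 hfB hT ht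
    (by rwa [div_le_iff₀' hδ] at htT)
  calc f t ≤ g t + ∫ τ in Ioo (0 : ℝ) 1, w τ * f (τ * t) := hineq t ht
    _ ≤ (∫ τ in Ioo (0 : ℝ) 1, w τ) * c + ε := by linarith

end

theorem gronwall_limit_lemma_general (w f g : ℝ → ℝ)
    (hw_int : IntegrableOn w (Set.Ioo 0 1))
    (hw_nonneg : ∀ᵐ x ∂(volume.restrict (Set.Ioo (0:ℝ) 1)), 0 ≤ w x)
    (hw_lt : ∫ x in Set.Ioo (0:ℝ) 1, w x < 1)
    (hf_nonneg : ∀ t, 0 < t → 0 ≤ f t)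
    (hf_bdd : ∃ B, ∀ t, 0 < t → f t ≤ B)
    (hineq : ∀ t, 0 < t → f t ≤ g t + ∫ τ in Set.Ioo (0:ℝ) 1, w τ * f (τ * t))
    (hg_lim : Tendsto g atTop (nhds 0)) :
    Tendsto f atTop (nhds 0) := by
  obtain ⟨B, hB⟩ := hf_bdd
  have hf0 : ∀ᶠ t in atTop, 0 ≤ f t :=
    (eventually_gt_atTop 0).mono fun t ht => hf_nonneg t ht
  have hf_bdd : IsBoundedUnder (· ≤ ·) atTop f :=
    isBoundedUnder_of_eventually_le ((eventually_gt_atTop 0).mono fun t ht => hB t ht)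
  exact tendsto_zero_of_eventually_le_mul_add hw_lt hf0 hf_bdd fun _ hc _ hε =>
    eventually_le_integral_mul_add hw_int hw_nonneg hf_nonneg hB hineq hg_lim hc hε

/-- Gronwall-type limit lemma (Lemma 3 of the paper, from Borchers–Miyakawa):
if `w ∈ L¹(0,1)` is a.e. nonnegative with `∫₀¹ w < 1`, and `f, g` are nonnegative
bounded measurable functions on `(0,∞)` with `f(t) ≤ g(t) + ∫₀¹ w(τ) f(τ t) dτ`,
then `g(t) → 0` as `t → ∞` implies `f(t) → 0` as `t → ∞`. -/
theorem gronwall_limit_lemma (w f g : ℝ → ℝ)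
    (hw_int : IntegrableOn w (Set.Ioo 0 1))
    (hw_nonneg : ∀ᵐ x ∂(volume.restrict (Set.Ioo (0:ℝ) 1)), 0 ≤ w x)
    (hw_lt : ∫ x in Set.Ioo (0:ℝ) 1, w x < 1)
    (hf_nonneg : ∀ t, 0 < t → 0 ≤ f t)
    (hg_nonneg : ∀ t, 0 < t → 0 ≤ g t)
    (hf_bdd : ∃ B, ∀ t, 0 < t → f t ≤ B)
    (hg_bdd : ∃ B, ∀ t, 0 < t → g t ≤ B)
    (hf_meas : Measurable f) (hg_meas : Measurable g)
    (hineq : ∀ t, 0 < t → f t ≤ g t + ∫ τ in Set.Ioo (0:ℝ) 1, w τ * f (τ * t))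
    (hg_lim : Tendsto g atTop (nhds 0)) :
    Tendsto f atTop (nhds 0) :=
  gronwall_limit_lemma_general w f g hw_int hw_nonneg hw_lt hf_nonneg hf_bdd hineq hg_lim
end

section
/- Let a, b ∈ [0,1) and c ≥ 0 be such that c·∫₀¹ (1−s)^{−a} s^{−b} ds < 1. Assume f, g : (0,∞) → ℝ are two nonnegative, bounded, measurable functions such that f(t) ≤ g(t) + c·∫₀¹ (1−s)^{−a} s^{−b} f(ts) ds for all t > 0. Then lim_{t→∞} g(t) = 0 implies lim_{t→∞} f(t) = 0. -/
open MeasureTheory Filter Set Topology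

/-!
Let `L = limsup f` and `q = ∫₀¹ w < 1`. For large `t`, split `∫₀¹ w(s) f(ts) ds` at a small `δ`:
on `(0, δ)` bound `f` by its global bound and use that `w` has little mass there (absolute
continuity of the integral); on `[δ, 1)` the argument `ts ≥ tδ` is large, so `f(ts) ≤ L + ε`.
Letting `ε → 0` gives `L ≤ q L`, hence `L = 0`.
-/

theorem integrableOn_one_sub_rpow_mul_rpow {a b : ℝ} (ha : a < 1) (hb : b < 1) :
    IntegrableOn (fun s : ℝ => (1 - s) ^ (-a) * s ^ (-b)) (Ioo 0 1) := by
  have h := Complex.betaIntegral_convergent (u := ((1 - b : ℝ) : ℂ)) (v := ((1 - a : ℝ) : ℂ))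
    (by simpa using hb) (by simpa using ha)
  rw [intervalIntegrable_iff_integrableOn_Ioo_of_le zero_le_one] at h
  refine IntegrableOn.congr_fun h.norm (fun s hs => ?_) measurableSet_Ioo
  have h1s : ((1 : ℂ) - s) = ((1 - s : ℝ) : ℂ) := by push_cast; ring
  rw [norm_mul, h1s, Complex.norm_cpow_eq_rpow_re_of_pos hs.1,
    Complex.norm_cpow_eq_rpow_re_of_pos (sub_pos.2 hs.2), mul_comm]
  simp

theorem integral_mul_le_of_le_on_of_le_off {α : Type*} [MeasurableSpace α] {μ : Measure α}
    {w φ : α → ℝ} {A : Set α} {B M : ℝ} (hA : MeasurableSet A) (hw : Integrable w μ)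
    (hw0 : ∀ᵐ x ∂μ, 0 ≤ w x) (hφ0 : ∀ᵐ x ∂μ, 0 ≤ φ x) (hφB : ∀ᵐ x ∂μ, x ∈ A → φ x ≤ B)
    (hφM : ∀ᵐ x ∂μ, x ∉ A → φ x ≤ M) (hM : 0 ≤ M) :
    ∫ x, w x * φ x ∂μ ≤ B * ∫ x in A, w x ∂μ + M * ∫ x, w x ∂μ := by
  have hdom : Integrable (fun x => B * A.indicator w x + M * w x) μ :=
    ((hw.indicator hA).const_mul B).add (hw.const_mul M)
  calc ∫ x, w x * φ x ∂μ ≤ ∫ x, B * A.indicator w x + M * w x ∂μ := by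
        refine integral_mono_of_nonneg ?_ hdom ?_
        · filter_upwards [hw0, hφ0] with x hwx hφx using mul_nonneg hwx hφx
        · filter_upwards [hw0, hφB, hφM] with x hwx hφBx hφMx
          by_cases hx : x ∈ A
          · simp only [indicator_of_mem hx]
            nlinarith [mul_le_mul_of_nonneg_left (hφBx hx) hwx, mul_nonneg hM hwx]
          · simp only [indicator_of_notMem hx]
            nlinarith [mul_le_mul_of_nonneg_left (hφMx hx) hwx]
    _ = B * ∫ x in A, w x ∂μ + M * ∫ x, w x ∂μ := by
        rw [integral_add ((hw.indicator hA).const_mul B) (hw.const_mul M), integral_const_mul,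
          integral_const_mul, integral_indicator hA]

theorem tendsto_setIntegral_Iio_nhdsGT_zero {w : ℝ → ℝ} (hw : IntegrableOn w (Ioo 0 1)) :
    Tendsto (fun δ => ∫ s in Iio δ, w s ∂volume.restrict (Ioo 0 1)) (𝓝[>] 0) (𝓝 0) := by
  refine Integrable.tendsto_setIntegral_nhds_zero hw ?_
  have hlen : Tendsto (fun δ : ℝ => ENNReal.ofReal δ) (𝓝[>] 0) (𝓝 0) := by
    simpa using (ENNReal.tendsto_ofReal (tendsto_id (x := 𝓝 (0 : ℝ)))).mono_left
      nhdsWithin_le_nhds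
  refine tendsto_of_tendsto_of_tendsto_of_le_of_le tendsto_const_nhds hlen (fun _ => zero_le)
    fun δ => ?_
  calc volume.restrict (Ioo 0 1) (Iio δ) = volume (Iio δ ∩ Ioo 0 1) :=
        Measure.restrict_apply measurableSet_Iio
    _ ≤ volume (Ioo 0 δ) := measure_mono fun s hs => ⟨hs.2.1, hs.1⟩
    _ = ENNReal.ofReal δ := by simp

theorem nonpos_of_forall_pos_le_mul_add {L q K : ℝ} (hq : q < 1)
    (h : ∀ ε > 0, L ≤ q * L + K * ε) : L ≤ 0 := by
  have hlim : Tendsto (fun ε => q * L + K * ε) (𝓝[>] 0) (𝓝 (q * L)) := by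
    have hcont : Continuous fun ε : ℝ => q * L + K * ε := by fun_prop
    simpa using (hcont.tendsto 0).mono_left nhdsWithin_le_nhds
  have hLq : L ≤ q * L := ge_of_tendsto hlim (eventually_nhdsWithin_of_forall h)
  nlinarith

theorem tendsto_zero_of_nonneg_of_limsup_nonpos {f : ℝ → ℝ} {B : ℝ}
    (hf0 : ∀ t, 0 < t → 0 ≤ f t) (hfB : ∀ t, 0 < t → f t ≤ B)
    (hL : limsup f atTop ≤ 0) : Tendsto f atTop (𝓝 0) := by
  have hf0' : ∀ᶠ t in atTop, 0 ≤ f t := (eventually_gt_atTop 0).mono hf0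
  have hfB' : ∀ᶠ t in atTop, f t ≤ B := (eventually_gt_atTop 0).mono hfB
  exact tendsto_of_le_liminf_of_limsup_le
    (le_liminf_of_le (isCoboundedUnder_ge_of_eventually_le atTop hfB') hf0') hL
    (isBoundedUnder_of_eventually_le hfB') (isBoundedUnder_of_eventually_ge hf0')

theorem limsup_le_mul_limsup_add_of_le_add_integral_dilation {w f g : ℝ → ℝ} {B ε : ℝ}
    (hw : IntegrableOn w (Ioo 0 1)) (hw0 : ∀ s ∈ Ioo 0 1, 0 ≤ w s)
    (hf0 : ∀ t, 0 < t → 0 ≤ f t) (hfB : ∀ t, 0 < t → f t ≤ B)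
    (hineq : ∀ t, 0 < t → f t ≤ g t + ∫ s in Ioo 0 1, w s * f (t * s))
    (hg : Tendsto g atTop (𝓝 0)) (hε : 0 < ε) :
    limsup f atTop ≤ (∫ s in Ioo 0 1, w s) * limsup f atTop
      + (1 + B + ∫ s in Ioo 0 1, w s) * ε := by
  set L := limsup f atTop
  set q := ∫ s in Ioo 0 1, w s
  have hf0' : ∀ᶠ t in atTop, 0 ≤ f t := (eventually_gt_atTop 0).mono hf0
  have hbdd : IsBoundedUnder (· ≤ ·) atTop f :=
    isBoundedUnder_of_eventually_le ((eventually_gt_atTop 0).mono hfB)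
  have hL0 : 0 ≤ L := le_limsup_of_frequently_le hf0'.frequently hbdd
  have hB0 : 0 ≤ B := (hf0 1 one_pos).trans (hfB 1 one_pos)
  obtain ⟨T, hT⟩ : ∃ T, ∀ t ≥ T, f t ≤ L + ε :=
    ((eventually_lt_of_limsup_lt (by linarith) hbdd).mono fun _ => le_of_lt).exists_forall_of_atTop
  obtain ⟨δ, hδtail, hδ⟩ : ∃ δ, ∫ s in Iio δ, w s ∂volume.restrict (Ioo 0 1) < ε ∧ 0 < δ :=
    (((tendsto_setIntegral_Iio_nhdsGT_zero hw).eventually (gt_mem_nhds hε)).and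
      self_mem_nhdsWithin).exists
  refine limsup_le_of_le (isCoboundedUnder_le_of_eventually_le atTop hf0') ?_
  filter_upwards [eventually_gt_atTop 0, (tendsto_id.atTop_mul_const hδ).eventually_ge_atTop T,
    hg.eventually (gt_mem_nhds hε)] with t ht (htT : T ≤ t * δ) hgt
  have hsplit := integral_mul_le_of_le_on_of_le_off (φ := fun s => f (t * s)) (B := B)
    (M := L + ε) measurableSet_Iio hw (ae_restrict_of_forall_mem measurableSet_Ioo hw0)
    (ae_restrict_of_forall_mem measurableSet_Ioo fun s hs => hf0 _ (mul_pos ht hs.1))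
    (ae_restrict_of_forall_mem measurableSet_Ioo fun s hs _ => hfB _ (mul_pos ht hs.1))
    (ae_restrict_of_forall_mem measurableSet_Ioo fun s _ hsδ =>
      hT _ (htT.trans (mul_le_mul_of_nonneg_left (not_lt.1 hsδ) ht.le)))
    (by linarith)
  calc f t ≤ g t + ∫ s in Ioo 0 1, w s * f (t * s) := hineq t ht
    _ ≤ ε + (B * ε + (L + ε) * q) := add_le_add hgt.le (hsplit.trans (by gcongr))
    _ = q * L + (1 + B + q) * ε := by ring

theorem tendsto_zero_of_le_add_integral_dilation {w f g : ℝ → ℝ} {B : ℝ}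
    (hw : IntegrableOn w (Ioo 0 1)) (hw0 : ∀ s ∈ Ioo 0 1, 0 ≤ w s)
    (hsmall : ∫ s in Ioo 0 1, w s < 1)
    (hf0 : ∀ t, 0 < t → 0 ≤ f t) (hfB : ∀ t, 0 < t → f t ≤ B)
    (hineq : ∀ t, 0 < t → f t ≤ g t + ∫ s in Ioo 0 1, w s * f (t * s))
    (hg : Tendsto g atTop (𝓝 0)) :
    Tendsto f atTop (𝓝 0) :=
  tendsto_zero_of_nonneg_of_limsup_nonpos hf0 hfB <| nonpos_of_forall_pos_le_mul_add hsmall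
    fun _ hε => limsup_le_mul_limsup_add_of_le_add_integral_dilation hw hw0 hf0 hfB hineq hg hε

theorem gronwall_limit_lemma_power_weight_general (a b c : ℝ)
    (ha1 : a < 1) (hb1 : b < 1) (hc : 0 ≤ c)
    (hsmall : c * ∫ s in Set.Ioo (0:ℝ) 1, (1 - s) ^ (-a) * s ^ (-b) < 1)
    (f g : ℝ → ℝ)
    (hf_nonneg : ∀ t, 0 < t → 0 ≤ f t)
    (hf_bdd : ∃ B, ∀ t, 0 < t → f t ≤ B)
    (hineq : ∀ t, 0 < t →
      f t ≤ g t + c * ∫ s in Set.Ioo (0:ℝ) 1, (1 - s) ^ (-a) * s ^ (-b) * f (t * s))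
    (hg_lim : Tendsto g atTop (nhds 0)) :
    Tendsto f atTop (nhds 0) := by
  obtain ⟨B, hB⟩ := hf_bdd
  refine tendsto_zero_of_le_add_integral_dilation (w := fun s => c * ((1 - s) ^ (-a) * s ^ (-b)))
    ((integrableOn_one_sub_rpow_mul_rpow ha1 hb1).const_mul c) (fun s hs => ?_)
    (by rwa [integral_const_mul]) hf_nonneg hB (fun t ht => ?_) hg_lim
  · exact mul_nonneg hc (mul_nonneg (Real.rpow_nonneg (sub_nonneg.2 hs.2.le) _)
      (Real.rpow_nonneg hs.1.le _))
  · simpa only [← integral_const_mul, mul_assoc] using hineq t ht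

/-- Instance of the Gronwall-type limit lemma with the power weight
`w(s) = c (1-s)^{-a} s^{-b}`, `a, b ∈ [0,1)`, used in Corollary 2 of the paper. -/
theorem gronwall_limit_lemma_power_weight (a b c : ℝ)
    (ha0 : 0 ≤ a) (ha1 : a < 1) (hb0 : 0 ≤ b) (hb1 : b < 1) (hc : 0 ≤ c)
    (hsmall : c * ∫ s in Set.Ioo (0:ℝ) 1, (1 - s) ^ (-a) * s ^ (-b) < 1)
    (f g : ℝ → ℝ)
    (hf_nonneg : ∀ t, 0 < t → 0 ≤ f t)
    (hg_nonneg : ∀ t, 0 < t → 0 ≤ g t)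
    (hf_bdd : ∃ B, ∀ t, 0 < t → f t ≤ B)
    (hg_bdd : ∃ B, ∀ t, 0 < t → g t ≤ B)
    (hf_meas : Measurable f) (hg_meas : Measurable g)
    (hineq : ∀ t, 0 < t →
      f t ≤ g t + c * ∫ s in Set.Ioo (0:ℝ) 1, (1 - s) ^ (-a) * s ^ (-b) * f (t * s))
    (hg_lim : Tendsto g atTop (nhds 0)) :
    Tendsto f atTop (nhds 0) :=
  gronwall_limit_lemma_power_weight_general a b c ha1 hb1 hc hsmall f g hf_nonneg hf_bdd hineq
    hg_lim
end

section
/- Let E be a normed vector space, let n, p be real numbers with 0 < n < p, set β = 1 − n/p, and let M, C, A ≥ 0. Let u, v : (0,∞) → E be strongly measurable functions such that ‖u(t)‖ ≤ M t^{−β/2} and ‖v(t)‖ ≤ M t^{−β/2} for all t > 0, and such that for all t > 0, ‖u(t) − v(t)‖ ≤ A t^{−β/2} + C ∫₀ᵗ (t−τ)^{−(1+n/p)/2} (‖u(τ)‖ + ‖v(τ)‖) ‖u(τ) − v(τ)‖ dτ. Then for all t > 0, ‖u(t) − v(t)‖ ≤ (A + 4C'C M²) t^{−β/2}, where C' = ∫₀¹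 (1−s)^{−(1+n/p)/2} s^{−β} ds (a finite constant). -/
/-!
Since ‖u − v‖ ≤ ‖u‖ + ‖v‖ ≤ 2Mτ^{-β/2}, the Duhamel integrand is dominated by
4M² (t − τ)^a τ^{-β} with a = −(1 + n/p)/2. The substitution τ = ts turns the integral of this
kernel over (0, t) into t^{1+a−β} C', and 1 + a − β = −β/2. The Beta kernel is integrable since
a > −1 and −β > −1, which is where 0 < n < p enters.
-/

open MeasureTheory Set

lemma intervalIntegrable_rpow_mul_one_sub_rpow_of_le_half {r : ℝ} (hr : -1 < r) (q : ℝ) :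
    IntervalIntegrable (fun s : ℝ => s ^ r * (1 - s) ^ q) volume 0 (1 / 2) := by
  refine (intervalIntegral.intervalIntegrable_rpow' hr).mul_continuousOn ?_
  refine ContinuousOn.rpow_const (by fun_prop) fun s hs => Or.inl ?_
  rw [uIcc_of_le (by norm_num)] at hs
  linarith [hs.2]

lemma intervalIntegrable_one_sub_rpow_mul_rpow {a b : ℝ} (ha : -1 < a) (hb : -1 < b) :
    IntervalIntegrable (fun s : ℝ => (1 - s) ^ a * s ^ b) volume 0 1 := by
  have hleft : IntervalIntegrable (fun s : ℝ => (1 - s) ^ a * s ^ b) volume 0 (1 / 2) := by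
    simpa only [mul_comm] using intervalIntegrable_rpow_mul_one_sub_rpow_of_le_half hb a
  have hright : IntervalIntegrable (fun s : ℝ => (1 - s) ^ a * s ^ b) volume (1 / 2) 1 := by
    simpa only [sub_zero, sub_sub_cancel, show (1 : ℝ) - 1 / 2 = 1 / 2 by norm_num] using
      ((intervalIntegrable_rpow_mul_one_sub_rpow_of_le_half ha b).comp_sub_left 1).symm
  exact hleft.trans hright

lemma sub_rpow_mul_rpow_eq {t τ : ℝ} (ht : 0 < t) (hτ : τ ∈ Icc 0 t) (a b : ℝ) :
    (t - τ) ^ a * τ ^ b = t ^ (a + b) * ((1 - τ / t) ^ a * (τ / t) ^ b) := by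
  rw [one_sub_div ht.ne', Real.div_rpow (sub_nonneg.2 hτ.2) ht.le,
    Real.div_rpow hτ.1 ht.le, Real.rpow_add ht]
  have := (Real.rpow_pos_of_pos ht a).ne'
  have := (Real.rpow_pos_of_pos ht b).ne'
  field_simp

lemma intervalIntegral_sub_rpow_mul_rpow {t : ℝ} (ht : 0 < t) (a b : ℝ) :
    ∫ τ in (0)..t, (t - τ) ^ a * τ ^ b = t ^ (1 + a + b) * ∫ s in (0)..1, (1 - s) ^ a * s ^ b := by
  rw [intervalIntegral.integral_congr fun τ hτ =>
      sub_rpow_mul_rpow_eq ht (uIcc_of_le ht.le ▸ hτ) a b,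
    intervalIntegral.integral_const_mul,
    intervalIntegral.integral_comp_div (fun s => (1 - s) ^ a * s ^ b) ht.ne',
    zero_div, div_self ht.ne', smul_eq_mul, add_assoc, Real.rpow_add ht 1, Real.rpow_one]
  ring

lemma integral_Ioo_sub_rpow_mul_rpow {t : ℝ} (ht : 0 < t) (a b : ℝ) :
    ∫ τ in Ioo 0 t, (t - τ) ^ a * τ ^ b = t ^ (1 + a + b) * ∫ s in Ioo 0 1, (1 - s) ^ a * s ^ b := by
  simpa only [intervalIntegral.integral_of_le ht.le, intervalIntegral.integral_of_le zero_le_one,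
    integral_Ioc_eq_integral_Ioo] using intervalIntegral_sub_rpow_mul_rpow ht a b

lemma integrableOn_Ioo_sub_rpow_mul_rpow {t a b : ℝ} (ht : 0 < t) (ha : -1 < a) (hb : -1 < b) :
    IntegrableOn (fun τ : ℝ => (t - τ) ^ a * τ ^ b) (Ioo 0 t) := by
  have hscaled : IntervalIntegrable (fun τ : ℝ => t ^ (a + b) * ((1 - τ / t) ^ a * (τ / t) ^ b))
      volume 0 t := by
    have := (intervalIntegrable_one_sub_rpow_mul_rpow ha hb).comp_mul_right (c := t⁻¹)
    simp only [zero_div, one_div, inv_inv, ← div_eq_mul_inv] at this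
    exact this.const_mul _
  rw [intervalIntegrable_iff_integrableOn_Ioo_of_le ht.le] at hscaled
  exact hscaled.congr_fun
    (fun τ hτ => (sub_rpow_mul_rpow_eq ht (Ioo_subset_Icc_self hτ) a b).symm) measurableSet_Ioo

lemma norm_add_norm_mul_norm_sub_le {E : Type*} [SeminormedAddCommGroup E] {x y : E} {K : ℝ}
    (hx : ‖x‖ ≤ K) (hy : ‖y‖ ≤ K) : (‖x‖ + ‖y‖) * ‖x - y‖ ≤ 4 * K ^ 2 :=
  calc (‖x‖ + ‖y‖) * ‖x - y‖ ≤ (‖x‖ + ‖y‖) * (‖x‖ + ‖y‖) := by gcongr; exact norm_sub_le x y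
    _ ≤ (K + K) * (K + K) := mul_self_le_mul_self (by positivity) (add_le_add hx hy)
    _ = 4 * K ^ 2 := by ring

lemma duhamel_integral_le {E : Type*} [SeminormedAddCommGroup E] {u v : ℝ → E} {M a β t : ℝ}
    (ht : 0 < t) (ha : -1 < a) (hβ : β < 1)
    (hu : ∀ τ : ℝ, 0 < τ → ‖u τ‖ ≤ M * τ ^ (-(β / 2)))
    (hv : ∀ τ : ℝ, 0 < τ → ‖v τ‖ ≤ M * τ ^ (-(β / 2))) :
    ∫ τ in Ioo 0 t, (t - τ) ^ a * (‖u τ‖ + ‖v τ‖) * ‖u τ - v τ‖ ≤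
      4 * (∫ s in Ioo 0 1, (1 - s) ^ a * s ^ (-β)) * M ^ 2 * t ^ (1 + a + -β) := by
  have hkernel_nonneg : ∀ τ ∈ Ioo 0 t, 0 ≤ (t - τ) ^ a := fun τ hτ =>
    Real.rpow_nonneg (sub_nonneg.2 hτ.2.le) a
  have hpointwise : ∀ τ ∈ Ioo 0 t, (t - τ) ^ a * (‖u τ‖ + ‖v τ‖) * ‖u τ - v τ‖ ≤
      (t - τ) ^ a * τ ^ (-β) * (4 * M ^ 2) := by
    intro τ hτ
    have hsq : (M * τ ^ (-(β / 2))) ^ 2 = M ^ 2 * τ ^ (-β) := by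
      rw [mul_pow, ← Real.rpow_natCast (τ ^ _), ← Real.rpow_mul hτ.1.le]
      norm_num
    calc (t - τ) ^ a * (‖u τ‖ + ‖v τ‖) * ‖u τ - v τ‖
        = (t - τ) ^ a * ((‖u τ‖ + ‖v τ‖) * ‖u τ - v τ‖) := mul_assoc _ _ _
      _ ≤ (t - τ) ^ a * (4 * (M * τ ^ (-(β / 2))) ^ 2) :=
          mul_le_mul_of_nonneg_left (norm_add_norm_mul_norm_sub_le (hu τ hτ.1) (hv τ hτ.1))
            (hkernel_nonneg τ hτ)
      _ = (t - τ) ^ a * τ ^ (-β) * (4 * M ^ 2) := by rw [hsq]; ring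
  calc ∫ τ in Ioo 0 t, (t - τ) ^ a * (‖u τ‖ + ‖v τ‖) * ‖u τ - v τ‖
      ≤ ∫ τ in Ioo 0 t, (t - τ) ^ a * τ ^ (-β) * (4 * M ^ 2) :=
        integral_mono_of_nonneg
          (ae_restrict_of_forall_mem measurableSet_Ioo fun τ hτ => by
            have := hkernel_nonneg τ hτ; positivity)
          ((integrableOn_Ioo_sub_rpow_mul_rpow ht ha (by linarith)).mul_const _)
          (ae_restrict_of_forall_mem measurableSet_Ioo hpointwise)
    _ = 4 * (∫ s in Ioo 0 1, (1 - s) ^ a * s ^ (-β)) * M ^ 2 * t ^ (1 + a + -β) := by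
        rw [integral_mul_const, integral_Ioo_sub_rpow_mul_rpow ht]
        ring

theorem navier_stokes_stability_estimate_general {E : Type*} [NormedAddCommGroup E]
    (n p : ℝ) (hn : 0 < n) (hnp : n < p) (β : ℝ) (hβ : β = 1 - n / p)
    (M C A : ℝ) (hC : 0 ≤ C)
    (u v : ℝ → E)
    (hub : ∀ t : ℝ, 0 < t → ‖u t‖ ≤ M * t ^ (-(β / 2)))
    (hvb : ∀ t : ℝ, 0 < t → ‖v t‖ ≤ M * t ^ (-(β / 2)))
    (hineq : ∀ t : ℝ, 0 < t → ‖u t - v t‖ ≤ A * t ^ (-(β / 2)) +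
      C * ∫ τ in Set.Ioo 0 t,
        (t - τ) ^ (-((1 + n / p) / 2)) * (‖u τ‖ + ‖v τ‖) * ‖u τ - v τ‖) :
    ∀ t : ℝ, 0 < t → ‖u t - v t‖ ≤
      (A + 4 * (∫ s in Set.Ioo (0:ℝ) 1, (1 - s) ^ (-((1 + n / p) / 2)) * s ^ (-β)) *
        C * M ^ 2) * t ^ (-(β / 2)) := by
  intro t ht
  have hnp0 : 0 < n / p := div_pos hn (hn.trans hnp)
  have hnp1 : n / p < 1 := (div_lt_one (hn.trans hnp)).2 hnp
  have hexp : 1 + -((1 + n / p) / 2) + -β = -(β / 2) := by rw [hβ]; ring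
  calc ‖u t - v t‖
      ≤ A * t ^ (-(β / 2)) + C * ∫ τ in Ioo 0 t,
          (t - τ) ^ (-((1 + n / p) / 2)) * (‖u τ‖ + ‖v τ‖) * ‖u τ - v τ‖ := hineq t ht
    _ ≤ A * t ^ (-(β / 2)) + C * (4 * (∫ s in Ioo 0 1, (1 - s) ^ (-((1 + n / p) / 2)) * s ^ (-β))
          * M ^ 2 * t ^ (1 + -((1 + n / p) / 2) + -β)) := by
        gcongr
        exact duhamel_integral_le ht (by linarith) (by linarith) hub hvb
    _ = _ := by rw [hexp]; ring

/-- Quantitative stability estimate (Theorem 2 of the paper): if `u, v` are two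
global solutions bounded by `M t^{-β/2}` whose difference satisfies the Duhamel
integral inequality coming from the bilinear heat-semigroup estimate, then
`‖u(t) - v(t)‖ ≤ (A + 4C'CM²) t^{-β/2}` where
`C' = ∫₀¹ (1-s)^{-(1+n/p)/2} s^{-β} ds`. -/
theorem navier_stokes_stability_estimate {E : Type*} [NormedAddCommGroup E]
    (n p : ℝ) (hn : 0 < n) (hnp : n < p) (β : ℝ) (hβ : β = 1 - n / p)
    (M C A : ℝ) (hM : 0 ≤ M) (hC : 0 ≤ C) (hA : 0 ≤ A)
    (u v : ℝ → E) (hu : StronglyMeasurable u) (hv : StronglyMeasurable v)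
    (hub : ∀ t : ℝ, 0 < t → ‖u t‖ ≤ M * t ^ (-(β / 2)))
    (hvb : ∀ t : ℝ, 0 < t → ‖v t‖ ≤ M * t ^ (-(β / 2)))
    (hineq : ∀ t : ℝ, 0 < t → ‖u t - v t‖ ≤ A * t ^ (-(β / 2)) +
      C * ∫ τ in Set.Ioo 0 t,
        (t - τ) ^ (-((1 + n / p) / 2)) * (‖u τ‖ + ‖v τ‖) * ‖u τ - v τ‖) :
    ∀ t : ℝ, 0 < t → ‖u t - v t‖ ≤
      (A + 4 * (∫ s in Set.Ioo (0:ℝ) 1, (1 - s) ^ (-((1 + n / p) / 2)) * s ^ (-β)) *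
        C * M ^ 2) * t ^ (-(β / 2)) :=
  navier_stokes_stability_estimate_general n p hn hnp β hβ M C A hC u v hub hvb hineq
end
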